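/- Let (R, m) be a Noetherian local ring, let I be an ideal of R of finite colength, let f ∈ R with r = r_f(I) < ∞, and let φ_{f,I} : R/I → R/I be multiplication by f. Then ℓ(R/I) = r · ℓ(R/(⟨f⟩ + I)) if and only if ker(φ_{f,I}) ⊆ (⟨f^i⟩ + I)/I for all i = 1, …, r−1. -/

import Mathlib

/-! Write `A = R ⧸ I`; then `φ` is multiplication by `f` on `A` and `φ ^ r = 0`. Restricting `φ`
to `φ^i A` gives `ℓ(φ^i A) = ℓ(φ^i A ∩ ker φ) + ℓ(φ^(i+1) A)`, so telescoping yields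
`ℓ(A) = ∑_{i<r} ℓ(φ^i A ∩ ker φ)`. Both `ℓ(ker φ)` and `ℓ(A/φA)` complement `ℓ(φA)` in `ℓ(A)`,
so they are equal. Every summand is at most `ℓ(ker φ)`, hence `ℓ(A) = r ℓ(A/φA)` iff every summand
equals `ℓ(ker φ)`, i.e. iff `ker φ ⊆ φ^i A` for all `i < r`. -/

/-- The length of an `R`-module `M`: the supremum of lengths of strictly increasing
chains of submodules of `M` (i.e. the Krull dimension of the submodule lattice),
viewed in `ℕ∞`. -/
noncomputable def moduleLength (R M : Type*) [Ring R] [AddCommGroup M] [Module R M] : ℕ∞ :=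
  WithBot.unbotD 0 (Order.krullDim (Submodule R M))

open LinearMap (ker range)

lemma moduleLength_eq_length (R M : Type*) [Ring R] [AddCommGroup M] [Module R M] :
    moduleLength R M = Module.length R M := by
  rw [moduleLength, ← Module.coe_length, WithBot.unbotD_coe]

lemma ENat.sum_eq_card_mul_iff {ι : Type*} {s : Finset ι} {a : ι → ℕ∞} {c : ℕ∞} (hc : c ≠ ⊤)
    (hle : ∀ i ∈ s, a i ≤ c) : ∑ i ∈ s, a i = s.card * c ↔ ∀ i ∈ s, a i = c := by
  lift c to ℕ using hc
  have ha : ∀ i ∈ s, ((a i).toNat : ℕ∞) = a i := fun i hi =>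
    ENat.natCast_toNat (ne_top_of_le_ne_top (ENat.natCast_ne_top c) (hle i hi))
  rw [← Finset.sum_congr rfl ha, ← Nat.cast_sum, ← Nat.cast_mul, Nat.cast_inj, ← smul_eq_mul,
    ← Finset.sum_const, Finset.sum_eq_sum_iff_of_le]
  · exact forall₂_congr fun i hi => by rw [← Nat.cast_inj (R := ℕ∞), ha i hi]
  · exact fun i hi => by exact_mod_cast (ha i hi).symm ▸ hle i hi

section Length

variable {R M N : Type*} [Ring R] [AddCommGroup M] [Module R M] [AddCommGroup N] [Module R N]

lemma Submodule.length_eq_length_add_length_quotient (P : Submodule R M) :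
    Module.length R M = Module.length R P + Module.length R (M ⧸ P) :=
  Module.length_eq_add_of_exact P.subtype P.mkQ P.injective_subtype P.mkQ_surjective
    (LinearMap.exact_subtype_mkQ P)

lemma LinearMap.length_eq_length_ker_add_length_range (g : M →ₗ[R] N) :
    Module.length R M = Module.length R (ker g) + Module.length R (range g) := by
  rw [← LinearMap.ker_rangeRestrict]
  exact Module.length_eq_add_of_exact _ g.rangeRestrict (Submodule.injective_subtype _)
    g.surjective_rangeRestrict (LinearMap.exact_subtype_ker_map _)

lemma LinearMap.length_submodule_eq_length_inf_ker_add_length_map (g : M →ₗ[R] N)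
    (P : Submodule R M) :
    Module.length R P = Module.length R ↥(P ⊓ ker g) + Module.length R (P.map g) := by
  rw [(g.domRestrict P).length_eq_length_ker_add_length_range, LinearMap.ker_domRestrict,
    LinearMap.range_domRestrict, ← Submodule.map_comap_subtype,
    ((Submodule.comap P.subtype (ker g)).equivMapOfInjective _ P.injective_subtype).length_eq]

lemma Module.End.length_quotient_range_eq_length_ker [IsArtinian R M] [IsNoetherian R M]
    (φ : Module.End R M) : Module.length R (M ⧸ range φ) = Module.length R (ker φ) := by
  have h := (range φ).length_eq_length_add_length_quotient
  rw [φ.length_eq_length_ker_add_length_range, add_comm] at h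
  exact (WithTop.add_left_cancel Module.length_ne_top h).symm

lemma Module.End.length_eq_sum_length_range_pow_inf_ker {φ : Module.End R M} {r : ℕ}
    (hφ : φ ^ r = 0) :
    Module.length R M = ∑ i ∈ Finset.range r, Module.length R ↥(range (φ ^ i) ⊓ ker φ) := by
  have telescope : ∀ n, Module.length R M =
      ∑ i ∈ Finset.range n, Module.length R ↥(range (φ ^ i) ⊓ ker φ) +
        Module.length R (range (φ ^ n)) := by
    intro n
    induction n with
    | zero =>
      rw [Finset.sum_range_zero, zero_add, pow_zero, Module.End.one_eq_id, LinearMap.range_id,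
        Module.length_top]
    | succ n ih =>
      rw [ih, Finset.sum_range_succ, add_assoc,
        φ.length_submodule_eq_length_inf_ker_add_length_map, ← LinearMap.range_comp,
        ← Module.End.mul_eq_comp, ← pow_succ']
  rw [telescope r, hφ, LinearMap.range_zero, Module.length_bot, add_zero]

lemma Submodule.length_eq_length_iff_of_le [IsArtinian R M] [IsNoetherian R M]
    {P Q : Submodule R M} (hle : P ≤ Q) : Module.length R P = Module.length R Q ↔ P = Q := by
  refine ⟨fun h => hle.eq_of_not_lt fun hlt => (Submodule.height_strictMono hlt).ne ?_,
    by rintro rfl; rfl⟩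
  rwa [Module.length_submodule, Module.length_submodule] at h

theorem Module.End.length_eq_mul_length_quotient_range_iff [IsArtinian R M] [IsNoetherian R M]
    {φ : Module.End R M} {r : ℕ} (hφ : φ ^ r = 0) :
    Module.length R M = r * Module.length R (M ⧸ range φ) ↔ ∀ i < r, ker φ ≤ range (φ ^ i) := by
  have hle : ∀ i ∈ Finset.range r,
      Module.length R ↥(range (φ ^ i) ⊓ ker φ) ≤ Module.length R (ker φ) := fun i _ => by
    simpa only [Module.length_submodule] using Order.height_mono inf_le_right
  have hsum := ENat.sum_eq_card_mul_iff Module.length_ne_top hle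
  rw [Finset.card_range] at hsum
  rw [φ.length_quotient_range_eq_length_ker, Module.End.length_eq_sum_length_range_pow_inf_ker hφ,
    hsum]
  simp only [Finset.mem_range]
  refine forall₂_congr fun i _ => ?_
  rw [Submodule.length_eq_length_iff_of_le inf_le_right, inf_eq_right]

end Length

section IdealQuotient

variable {R : Type*} [CommRing R] (I : Ideal R) (f : R)

lemma Ideal.range_smul_one_pow_eq_map_span (i : ℕ) :
    range ((f • 1 : Module.End R (R ⧸ I)) ^ i) = Submodule.map I.mkQ (Ideal.span {f ^ i}) := by
  have hcomp : ((f • 1 : Module.End R (R ⧸ I)) ^ i) ∘ₗ I.mkQ =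
      I.mkQ ∘ₗ LinearMap.toSpanSingleton R R (f ^ i) := by
    ext
    simp only [smul_pow, one_pow, LinearMap.comp_apply, LinearMap.smul_apply, Module.End.one_apply,
      LinearMap.toSpanSingleton_apply, ← LinearMap.map_smul, smul_eq_mul, mul_one, one_mul]
  rw [← LinearMap.range_comp_of_range_eq_top _ I.range_mkQ, hcomp, LinearMap.range_comp,
    ← LinearMap.span_singleton_eq_range]

lemma Ideal.smul_one_pow_eq_zero {r : ℕ} (hfr : f ^ r ∈ I) :
    (f • 1 : Module.End R (R ⧸ I)) ^ r = 0 := by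
  rw [← LinearMap.range_eq_bot, Ideal.range_smul_one_pow_eq_map_span, eq_bot_iff,
    Submodule.map_le_iff_le_comap, Submodule.comap_bot, Submodule.ker_mkQ,
    Ideal.span_singleton_le_iff_mem]
  exact hfr

lemma Ideal.length_quotient_range_smul_one :
    Module.length R ((R ⧸ I) ⧸ range (f • 1 : Module.End R (R ⧸ I))) =
      Module.length R (R ⧸ (Ideal.span {f} + I)) := by
  have hrange :
      range (f • 1 : Module.End R (R ⧸ I)) = Submodule.map I.mkQ (Ideal.span {f} + I) := by
    rw [← pow_one (f • 1 : Module.End R (R ⧸ I)), Ideal.range_smul_one_pow_eq_map_span, pow_one,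
      Submodule.add_eq_sup, Submodule.map_sup, Submodule.mkQ_map_self, sup_bot_eq]
  exact ((Submodule.quotEquivOfEq _ _ hrange).trans
    (Submodule.quotientQuotientEquivQuotient I _ le_sup_right)).length_eq

end IdealQuotient

theorem length_eq_mul_iff_ker_subset_all_general
    (R : Type*) [CommRing R]
    (I : Ideal R) (hI : moduleLength R (R ⧸ I) ≠ ⊤)
    (f : R) (hf : ∃ r : ℕ, 0 < r ∧ f ^ r ∈ I)
    (r : ℕ) (hr : r = sInf {r : ℕ | 0 < r ∧ f ^ r ∈ I})
    (φ : (R ⧸ I) →ₗ[R] (R ⧸ I))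
    (hφ : ∀ g : R, φ (Ideal.Quotient.mk I g) = Ideal.Quotient.mk I (f * g)) :
    moduleLength R (R ⧸ I) = (r : ℕ∞) * moduleLength R (R ⧸ (Ideal.span {f} + I)) ↔
      ∀ i : ℕ, 1 ≤ i → i ≤ r - 1 →
        LinearMap.ker φ ≤ Submodule.map I.mkQ (Ideal.span {f ^ i}) := by
  have hfr : f ^ r ∈ I := (hr ▸ Nat.sInf_mem hf).2
  rw [moduleLength_eq_length, Module.length_ne_top_iff,
    isFiniteLength_iff_isNoetherian_isArtinian] at hI
  obtain ⟨_, _⟩ := hI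
  obtain rfl : φ = f • 1 := by
    ext
    simpa [Algebra.smul_def] using hφ 1
  rw [moduleLength_eq_length, moduleLength_eq_length, ← Ideal.length_quotient_range_smul_one,
    Module.End.length_eq_mul_length_quotient_range_iff (Ideal.smul_one_pow_eq_zero I f hfr)]
  simp only [← Ideal.range_smul_one_pow_eq_map_span I f]
  refine ⟨fun h i hi hir => h i (by omega), fun h i hir => ?_⟩
  rcases Nat.eq_zero_or_pos i with rfl | hi
  · rw [pow_zero, Module.End.one_eq_id, LinearMap.range_id]
    exact le_top
  · exact h i hi (by omega)

/-- Let `(R, m)` be a Noetherian local ring, `I` an ideal of finite colength, `f ∈ R` with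
`r = r_f(I) < ∞`, and let `φ_{f,I} : R/I → R/I` be multiplication by `f`.  Then
`ℓ(R/I) = r · ℓ(R/(⟨f⟩ + I))` if and only if `ker(φ_{f,I}) ⊆ (⟨f^i⟩ + I)/I` for all
`i = 1, …, r−1`, where `(⟨f^i⟩ + I)/I` is the image in `R/I` of the ideal generated by `f^i`. -/
theorem length_eq_mul_iff_ker_subset_all
    (R : Type*) [CommRing R] [IsNoetherianRing R] [IsLocalRing R]
    (I : Ideal R) (hI : moduleLength R (R ⧸ I) ≠ ⊤)
    (f : R) (hf : ∃ r : ℕ, 0 < r ∧ f ^ r ∈ I)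
    (r : ℕ) (hr : r = sInf {r : ℕ | 0 < r ∧ f ^ r ∈ I})
    (φ : (R ⧸ I) →ₗ[R] (R ⧸ I))
    (hφ : ∀ g : R, φ (Ideal.Quotient.mk I g) = Ideal.Quotient.mk I (f * g)) :
    moduleLength R (R ⧸ I) = (r : ℕ∞) * moduleLength R (R ⧸ (Ideal.span {f} + I)) ↔
      ∀ i : ℕ, 1 ≤ i → i ≤ r - 1 →
        LinearMap.ker φ ≤ Submodule.map I.mkQ (Ideal.span {f ^ i}) :=
  length_eq_mul_iff_ker_subset_all_general R I hI f hf r hr φ hφ
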